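/- Any real matrix with sign pattern S' = diag(T', D, D, D, D, D), where D is any 2×2 sign pattern with at least one nonzero entry, does not admit the characteristic polynomial t^16; more generally, S' allows no nilpotent realization whose leading 6×6 block (with pattern T') is nilpotent. In particular, S' is not spectrally arbitrary. -/

import Mathlib

/-!
The block-diagonal shape of `M` makes `charpoly M = t ^ 16` force `M ^ 16 = 0`, hence the
leading `6 × 6` block `A` (pattern `T'`) is nilpotent, so `tr A = tr A³ = 0`. The closed walks of
length 3 in the digraph of `T'` (indices from 0) are the loops at 0 and 1, the 2-cycle `0 ↔ 1`
with a loop, and the single 3-cycle `0 → 1 → 2 → 0`, so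
`tr A³ = a₀₀³ + a₁₁³ + 3 a₀₁ a₁₀ (a₀₀ + a₁₁) + 3 a₀₁ a₁₂ a₂₀`.
Since `a₀₀ + a₁₁ = tr A = 0`, this equals `3 a₀₁ a₁₂ a₂₀`, which is positive by the sign pattern.
-/

open Polynomial Matrix
open scoped Classical

def hasSign {m : Type*} (P M : Matrix m m ℝ) : Prop :=
  ∀ i j, Real.sign (M i j) = P i j

def patT : Matrix (Fin 6) (Fin 6) ℝ :=
  !![1,1,0,0,0,0; -1,-1,1,0,0,0; 0,0,0,1,0,0; 0,0,0,0,1,0;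
     -1,-1,0,0,0,1; 1,1,1,0,-1,0]

def patT' : Matrix (Fin 6) (Fin 6) ℝ :=
  !![1,1,0,0,0,0; -1,-1,1,0,0,0; 1,0,0,1,0,0; 0,0,0,0,1,0;
     -1,-1,0,0,0,1; 1,1,1,0,-1,0]
def IsSpectrallyArbitrary {m : Type*} [Fintype m] [DecidableEq m]
    (P : Matrix m m ℝ) : Prop :=
  ∀ p : ℝ[X], p.Monic → p.natDegree = Fintype.card m →
    ∃ M : Matrix m m ℝ, hasSign P M ∧ M.charpoly = p

/-- block-diagonal pattern with 5 copies of a 2×2 pattern `D`. -/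
def pat5D (D : Matrix (Fin 2) (Fin 2) ℝ) :
    Matrix (Fin 5 × Fin 2) (Fin 5 × Fin 2) ℝ :=
  Matrix.of fun a b => if a.1 = b.1 then D a.2 b.2 else 0

namespace Matrix

variable {n R : Type*} [Fintype n] [DecidableEq n]

lemma trace_pow_eq_zero_of_isNilpotent [CommRing R] [IsReduced R] {A : Matrix n n R}
    (hA : IsNilpotent A) {k : ℕ} (hk : k ≠ 0) : trace (A ^ k) = 0 :=
  (isNilpotent_trace_of_isNilpotent (hA.pow_of_pos hk)).eq_zero

lemma isNilpotent_of_charpoly_eq_X_pow [CommRing R] {A : Matrix n n R} {k : ℕ}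
    (h : A.charpoly = X ^ k) : IsNilpotent A :=
  ⟨k, by simpa [h] using A.aeval_self_charpoly⟩

lemma IsNilpotent.fromBlocks_diagonal_left [Semiring R] {m : Type*} [Fintype m] [DecidableEq m]
    {A : Matrix n n R} {B : Matrix m m R} (h : IsNilpotent (fromBlocks A 0 0 B)) :
    IsNilpotent A := by
  obtain ⟨k, hk⟩ := h
  rw [fromBlocks_diagonal_pow, ← fromBlocks_zero] at hk
  exact ⟨k, (fromBlocks_inj.mp hk).1⟩

end Matrix

section hasSign

variable {m : Type*} {P M : Matrix m m ℝ}

lemma hasSign.eq_zero (h : hasSign P M) {i j : m} (hP : P i j = 0) : M i j = 0 :=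
  Real.sign_eq_zero_iff.mp ((h i j).trans hP)

lemma hasSign.pos (h : hasSign P M) {i j : m} (hP : P i j = 1) : 0 < M i j := by
  rcases lt_trichotomy (M i j) 0 with hM | hM | hM
  · linarith [(h i j).symm.trans (Real.sign_of_neg hM)]
  · linarith [(h i j).symm.trans (hM ▸ Real.sign_zero)]
  · exact hM

lemma hasSign.toBlocks₁₁ {l r : Type*} {P : Matrix l l ℝ} {Q : Matrix r r ℝ}
    {M : Matrix (l ⊕ r) (l ⊕ r) ℝ} (h : hasSign (fromBlocks P 0 0 Q) M) :
    hasSign P M.toBlocks₁₁ :=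
  fun i j => h (.inl i) (.inl j)

lemma hasSign.eq_fromBlocks {l r : Type*} {P : Matrix l l ℝ} {Q : Matrix r r ℝ}
    {M : Matrix (l ⊕ r) (l ⊕ r) ℝ} (h : hasSign (fromBlocks P 0 0 Q) M) :
    M = fromBlocks M.toBlocks₁₁ 0 0 M.toBlocks₂₂ := by
  conv_lhs => rw [← fromBlocks_toBlocks M]
  congr <;> ext i j
  · exact h.eq_zero (i := .inl i) (j := .inr j) rfl
  · exact h.eq_zero (i := .inr i) (j := .inl j) rfl

end hasSign

lemma trace_of_support_patT' {A : Matrix (Fin 6) (Fin 6) ℝ}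
    (hA : ∀ i j, patT' i j = 0 → A i j = 0) :
    trace A = A 0 0 + A 1 1 := by
  simp (disch := simp [patT']) only [Matrix.trace, diag, Fin.sum_univ_six, hA]
  ring

lemma trace_pow_three_of_support_patT' {A : Matrix (Fin 6) (Fin 6) ℝ}
    (hA : ∀ i j, patT' i j = 0 → A i j = 0) :
    trace (A ^ 3) = A 0 0 ^ 3 + A 1 1 ^ 3 + 3 * A 0 1 * A 1 0 * (A 0 0 + A 1 1)
      + 3 * A 0 1 * A 1 2 * A 2 0 := by
  simp (disch := simp [patT']) only
    [Matrix.trace, diag, pow_three, mul_apply, Fin.sum_univ_six, hA]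
  ring

lemma not_isNilpotent_of_hasSign_patT' {A : Matrix (Fin 6) (Fin 6) ℝ} (hA : hasSign patT' A) :
    ¬ IsNilpotent A := by
  intro hnil
  have hsupp : ∀ i j, patT' i j = 0 → A i j = 0 := fun _ _ => hA.eq_zero
  have htr : A 0 0 + A 1 1 = 0 := by
    rw [← trace_of_support_patT' hsupp, ← pow_one A]
    exact trace_pow_eq_zero_of_isNilpotent hnil one_ne_zero
  have htr3 := trace_pow_three_of_support_patT' hsupp ▸
    trace_pow_eq_zero_of_isNilpotent hnil three_ne_zero
  have hcycle : 0 < A 0 1 * A 1 2 * A 2 0 :=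
    mul_pos (mul_pos (hA.pos (by simp [patT'])) (hA.pos (by simp [patT'])))
      (hA.pos (by simp [patT']))
  -- `a³ + d³ = (a + d)(a² - ad + d²)` gives the coefficient of `htr`.
  exact hcycle.ne' (by
    linear_combination
      (htr3 - (A 0 0 ^ 2 - A 0 0 * A 1 1 + A 1 1 ^ 2 + 3 * A 0 1 * A 1 0) * htr) / 3)

theorem stmt_17_general (D : Matrix (Fin 2) (Fin 2) ℝ) :
    (∀ M : Matrix (Fin 6 ⊕ Fin 5 × Fin 2) (Fin 6 ⊕ Fin 5 × Fin 2) ℝ,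
        hasSign (Matrix.fromBlocks patT' 0 0 (pat5D D)) M →
        M.charpoly ≠ X ^ 16) ∧
    (∀ M : Matrix (Fin 6 ⊕ Fin 5 × Fin 2) (Fin 6 ⊕ Fin 5 × Fin 2) ℝ,
        hasSign (Matrix.fromBlocks patT' 0 0 (pat5D D)) M →
        ¬ IsNilpotent (Matrix.of fun i j : Fin 6 => M (Sum.inl i) (Sum.inl j))) ∧
    ¬ IsSpectrallyArbitrary (Matrix.fromBlocks patT' 0 0 (pat5D D)) := by
  have hblock : ∀ M : Matrix (Fin 6 ⊕ Fin 5 × Fin 2) (Fin 6 ⊕ Fin 5 × Fin 2) ℝ,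
      hasSign (Matrix.fromBlocks patT' 0 0 (pat5D D)) M → ¬ IsNilpotent M.toBlocks₁₁ :=
    fun _ hM => not_isNilpotent_of_hasSign_patT' hM.toBlocks₁₁
  have hcharpoly : ∀ M : Matrix (Fin 6 ⊕ Fin 5 × Fin 2) (Fin 6 ⊕ Fin 5 × Fin 2) ℝ,
      hasSign (Matrix.fromBlocks patT' 0 0 (pat5D D)) M → M.charpoly ≠ X ^ 16 := by
    intro M hM h
    have hnil := isNilpotent_of_charpoly_eq_X_pow h
    rw [hM.eq_fromBlocks] at hnil
    exact hblock M hM hnil.fromBlocks_diagonal_left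
  refine ⟨hcharpoly, hblock, fun hSA => ?_⟩
  obtain ⟨M, hM, h⟩ := hSA (X ^ 16) (monic_X_pow 16) (by simp)
  exact hcharpoly M hM h

theorem stmt_17 (D : Matrix (Fin 2) (Fin 2) ℝ)
    (hDsign : ∀ i j, D i j = -1 ∨ D i j = 0 ∨ D i j = 1)
    (hDne : ∃ i j, D i j ≠ 0) :
    (∀ M : Matrix (Fin 6 ⊕ Fin 5 × Fin 2) (Fin 6 ⊕ Fin 5 × Fin 2) ℝ,
        hasSign (Matrix.fromBlocks patT' 0 0 (pat5D D)) M →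
        M.charpoly ≠ X ^ 16) ∧
    (∀ M : Matrix (Fin 6 ⊕ Fin 5 × Fin 2) (Fin 6 ⊕ Fin 5 × Fin 2) ℝ,
        hasSign (Matrix.fromBlocks patT' 0 0 (pat5D D)) M →
        ¬ IsNilpotent (Matrix.of fun i j : Fin 6 => M (Sum.inl i) (Sum.inl j))) ∧
    ¬ IsSpectrallyArbitrary (Matrix.fromBlocks patT' 0 0 (pat5D D)) :=
  stmt_17_general D
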